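/- In any boolean Dedekind quantale, complementation commutes with converse, (−α)° = −(α°), and the residual law α°·(−(αβ)) ≤ −β holds. -/

import Mathlib

/-! Converse is a monotone involution, hence an order automorphism, hence commutes with
complementation. The residual law is the Dedekind law with `c = -(αβ)`:
`α°(-(αβ)) ⊓ β ≤ (…)(-(αβ) ⊓ αβ) = ⊥`. -/

/-- A quantale: a complete lattice with an associative, sup-preserving
multiplication with unit. -/
structure QuantaleStr (Q : Type*) [CompleteLattice Q] where
  mul : Q → Q → Q
  one : Q
  mul_assoc : ∀ a b c : Q, mul (mul a b) c = mul a (mul b c)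
  one_mul : ∀ a : Q, mul one a = a
  mul_one : ∀ a : Q, mul a one = a
  mul_sSup : ∀ (a : Q) (S : Set Q), mul a (sSup S) = ⨆ b ∈ S, mul a b
  sSup_mul : ∀ (a : Q) (S : Set Q), mul (sSup S) a = ⨆ b ∈ S, mul b a

/-- An involutive quantale. -/
structure InvQuantale (Q : Type*) [CompleteLattice Q] extends QuantaleStr Q where
  inv : Q → Q
  inv_inv : ∀ a : Q, inv (inv a) = a
  inv_sSup : ∀ S : Set Q, inv (sSup S) = ⨆ a ∈ S, inv a
  inv_mul : ∀ a b : Q, inv (mul a b) = mul (inv b) (inv a)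

/-- A Dedekind quantale: an involutive quantale satisfying the Dedekind law. -/
structure DedekindQuantale (Q : Type*) [CompleteLattice Q] extends InvQuantale Q where
  dedekind : ∀ a b c : Q,
    mul a b ⊓ c ≤ mul (a ⊓ mul c (inv b)) (b ⊓ mul (inv a) c)

namespace QuantaleStr

variable {Q : Type*} [CompleteLattice Q] (X : QuantaleStr Q)

theorem mul_bot (a : Q) : X.mul a ⊥ = ⊥ := by
  simpa using X.mul_sSup a ∅

end QuantaleStr

namespace InvQuantale

section CompleteLattice

variable {Q : Type*} [CompleteLattice Q] (X : InvQuantale Q)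

theorem inv_sup (a b : Q) : X.inv (a ⊔ b) = X.inv a ⊔ X.inv b := by
  rw [← sSup_pair, X.inv_sSup, iSup_pair]

theorem inv_monotone : Monotone X.inv := fun a b hab =>
  calc X.inv a ≤ X.inv a ⊔ X.inv b := le_sup_left
    _ = X.inv b := by rw [← inv_sup, sup_eq_right.2 hab]

def invOrderIso : Q ≃o Q :=
  (Function.Involutive.toPerm X.inv X.inv_inv).toOrderIso X.inv_monotone X.inv_monotone

end CompleteLattice

theorem inv_compl {Q : Type*} [CompleteBooleanAlgebra Q] (X : InvQuantale Q) (a : Q) :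
    X.inv aᶜ = (X.inv a)ᶜ :=
  map_compl' X.invOrderIso a

end InvQuantale

namespace DedekindQuantale

variable {Q : Type*} [CompleteLattice Q] (X : DedekindQuantale Q)

theorem disjoint_inv_mul_of_disjoint_mul {a b c : Q} (h : Disjoint c (X.mul a b)) :
    Disjoint (X.mul (X.inv a) c) b := by
  have hded := X.dedekind (X.inv a) c b
  rw [X.inv_inv, h.eq_bot, X.mul_bot] at hded
  exact disjoint_iff.2 (le_bot_iff.1 hded)

end DedekindQuantale

/-- In a boolean Dedekind quantale, complementation commutes with converse
and the residual law holds. -/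
theorem boolean_dedekind_residual {Q : Type*} [CompleteBooleanAlgebra Q]
    (X : DedekindQuantale Q) :
    (∀ a : Q, X.inv aᶜ = (X.inv a)ᶜ) ∧
    (∀ a b : Q, X.mul (X.inv a) (X.mul a b)ᶜ ≤ bᶜ) :=
  ⟨X.inv_compl, fun _ _ => (X.disjoint_inv_mul_of_disjoint_mul disjoint_compl_left).le_compl_right⟩
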